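/- Let X be a topological space, E a commutative Banach algebra, and f, g: X → E bounded mappings with countable oscillation rank. Then the product fg has countable oscillation rank. -/

import Mathlib

open Set Filter Ordinal ENNReal

universe u v

section Defs

variable {X : Type u} {E : Type v}

/-- `f` restricted to `A` is `ε`-fragmented: every nonempty subset of `A` has a relatively
open nonempty piece on which the oscillation (diameter of the image) of `f` is at most `ε`. -/
def EpsFragOn [TopologicalSpace X] [PseudoEMetricSpace E] (f : X → E) (A : Set X)
    (ε : ℝ≥0∞) : Prop :=
  ∀ F : Set X, F ⊆ A → F.Nonempty → ∃ V : Set X, IsOpen V ∧ (V ∩ F).Nonempty ∧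
    EMetric.diam (f '' (V ∩ F)) ≤ ε

/-- The fragmentability index `frag f = inf {ε > 0 : f is ε-fragmented}` (with `inf ∅ = ∞`). -/
noncomputable def fragIdx [TopologicalSpace X] [PseudoEMetricSpace E] (f : X → E) : ℝ≥0∞ :=
  sInf {ε | 0 < ε ∧ EpsFragOn f Set.univ ε}

/-- A set `H` is resolvable: every nonempty `A ⊆ X` has a relatively open nonempty piece
entirely inside `H` or entirely inside its complement. -/
def Resolvable [TopologicalSpace X] (H : Set X) : Prop :=
  ∀ A : Set X, A.Nonempty → ∃ U : Set X, IsOpen U ∧ (U ∩ A).Nonempty ∧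
    (U ∩ A ⊆ H ∨ U ∩ A ⊆ Hᶜ)

/-- The σ-fragmentability index by resolvable sets. -/
noncomputable def sfragIdx [TopologicalSpace X] [PseudoEMetricSpace E] (f : X → E) : ℝ≥0∞ :=
  sInf {ε | 0 < ε ∧ ∃ H : ℕ → Set X, (∀ n, Resolvable (H n)) ∧ (⋃ n, H n) = Set.univ ∧
    ∀ n, EpsFragOn f (H n) ε}

/-- `g` is constant on each set of some resolvable partition of `X`, i.e. on each difference
`U (γ+1) \ U γ` of an increasing transfinite sequence of open sets from `∅` to `X`,
continuous at limit ordinals. -/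
def ConstOnResolvablePartition [TopologicalSpace X] (g : X → E) : Prop :=
  ∃ (κ : Ordinal.{u}) (U : Ordinal.{u} → Set X),
    (∀ α, IsOpen (U α)) ∧ (∀ α β : Ordinal, α ≤ β → U α ⊆ U β) ∧
    U 0 = ∅ ∧ U κ = Set.univ ∧
    (∀ γ, γ ≤ κ → Order.IsSuccLimit γ → U γ = ⋃ α < γ, U α) ∧
    (∀ γ < κ, ∀ x ∈ U (γ + 1) \ U γ, ∀ y ∈ U (γ + 1) \ U γ, g x = g y)

/-- The transfinite derivation of open sets in the definition of the oscillation rank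
`β(f, ε)`:  `U 0 = ∅`, `U (α+1) = U α ∪ {x ∉ U α : ∃ open V ∋ x, diam f (V \ U α) < ε}`,
and unions at limit ordinals. -/
noncomputable def oscSet [TopologicalSpace X] [PseudoEMetricSpace E] (f : X → E)
    (ε : ℝ≥0∞) (o : Ordinal.{u}) : Set X :=
  Ordinal.limitRecOn o ∅
    (fun _ U => U ∪ {x | x ∉ U ∧ ∃ V : Set X, IsOpen V ∧ x ∈ V ∧
      EMetric.diam (f '' (V \ U)) < ε})
    (fun γ _ ih => ⋃ (β : Ordinal) (h : β < γ), ih β h)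

/-- `f` has countable oscillation rank: `β(f) < ω₁`, i.e. for every `ε > 0` the derivation
reaches `X` at some countable ordinal. -/
def CountableOscRank [TopologicalSpace X] [PseudoEMetricSpace E] (f : X → E) : Prop :=
  ∀ ε : ℝ≥0∞, 0 < ε → ∃ α < ω₁, oscSet f ε α = Set.univ

/-- A transfinite sequence `(V α)_{α ≤ κ}` of open sets has property `*(f, ε)`. -/
def StarProp [TopologicalSpace X] [PseudoEMetricSpace E] (f : X → E) (ε : ℝ≥0∞)
    (κ : Ordinal.{u}) (V : Ordinal.{u} → Set X) : Prop :=
  (∀ α, α ≤ κ → IsOpen (V α)) ∧ (∀ α β : Ordinal, α ≤ β → β ≤ κ → V α ⊆ V β) ∧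
  V 0 = ∅ ∧ V κ = Set.univ ∧
  (∀ γ, γ ≤ κ → Order.IsSuccLimit γ → V γ = ⋃ α < γ, V α) ∧
  (∀ α < κ, ∀ x ∈ V (α + 1) \ V α, ∃ W : Set X, IsOpen W ∧ x ∈ W ∧
    EMetric.diam (f '' (W \ V α)) < ε)

/-- Uniform distance `d(f, g) = sup_x ρ(f x, g x)` (in `[0, ∞]`). -/
noncomputable def unifDist [PseudoEMetricSpace E] (f g : X → E) : ℝ≥0∞ :=
  ⨆ x, edist (f x) (g x)

/-- Distance from `f` to the family of σ-fragmented mappings. -/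
noncomputable def distToSFrag [TopologicalSpace X] [PseudoEMetricSpace E] (f : X → E) : ℝ≥0∞ :=
  ⨅ (g : {g : X → E // sfragIdx g = 0}), unifDist f g.1

end Defs

/-! If `f` and `g` both oscillate by less than `δ` on a set, then `f * g` oscillates there by at
most `(sup ‖f‖ + sup ‖g‖) δ`. Hence, with `b` the `δ`-rank of `g`, the `ε`-derivation of `f * g`
can follow the `δ`-derivation of `f` layer by layer, spending `b` steps on each layer to follow
the `δ`-derivation of `g` inside it: stage `α` of `f` is absorbed by stage `b * α` of `f * g`,
and `b * a < ω₁` when `a, b < ω₁`. -/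

open scoped NNReal

section OscSet

variable {X : Type u} {E : Type v} [TopologicalSpace X] [PseudoEMetricSpace E]
  (f : X → E) (ε : ℝ≥0∞)

lemma oscSet_zero : oscSet f ε 0 = ∅ :=
  limitRecOn_zero _ _ _

lemma oscSet_add_one (o : Ordinal.{u}) :
    oscSet f ε (o + 1) = oscSet f ε o ∪ {x | x ∉ oscSet f ε o ∧ ∃ V : Set X,
      IsOpen V ∧ x ∈ V ∧ Metric.ediam (f '' (V \ oscSet f ε o)) < ε} :=
  limitRecOn_add_one _ _ _ _

lemma oscSet_limit {o : Ordinal.{u}} (ho : Order.IsSuccLimit o) :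
    oscSet f ε o = ⋃ β < o, oscSet f ε β :=
  limitRecOn_limit _ _ _ _ ho

lemma mem_oscSet_add_one {o : Ordinal.{u}} {x : X} :
    x ∈ oscSet f ε (o + 1) ↔ x ∈ oscSet f ε o ∨
      ∃ V : Set X, IsOpen V ∧ x ∈ V ∧ Metric.ediam (f '' (V \ oscSet f ε o)) < ε := by
  rw [oscSet_add_one, mem_union, mem_ofPred_eq]
  tauto

lemma oscSet_mono : Monotone (oscSet f ε) := by
  intro a b hab
  induction b using limitRecOn with
  | zero => rw [nonpos_iff_eq_zero.1 hab]
  | add_one b ih =>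
    rcases hab.eq_or_lt with rfl | hab
    · rfl
    · exact (ih (Order.lt_add_one_iff.1 hab)).trans
        fun x hx => (mem_oscSet_add_one f ε).2 (Or.inl hx)
  | limit b hb _ =>
    rcases hab.eq_or_lt with rfl | hab
    · rfl
    · rw [oscSet_limit f ε hb]
      exact subset_biUnion_of_mem (u := oscSet f ε) hab

variable {f ε}

lemma diff_subset_oscSet_add_one {o : Ordinal.{u}} {V : Set X} (hV : IsOpen V)
    (hd : Metric.ediam (f '' (V \ oscSet f ε o)) < ε) :
    V \ oscSet f ε o ⊆ oscSet f ε (o + 1) :=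
  fun _ hx => (mem_oscSet_add_one f ε).2 (Or.inr ⟨V, hV, hx.1, hd⟩)

end OscSet

section Domination

variable {X : Type u} {E F G : Type*} [TopologicalSpace X]
  [PseudoEMetricSpace E] [PseudoEMetricSpace F] [PseudoEMetricSpace G]
  {f : X → E} {g : X → F} {h : X → G} {δ₁ δ₂ ε : ℝ≥0∞}

lemma inter_oscSet_subset_oscSet_add
    (hfgh : ∀ S, Metric.ediam (f '' S) < δ₁ → Metric.ediam (g '' S) < δ₂ →
      Metric.ediam (h '' S) < ε)
    {α c : Ordinal.{u}} (hα : oscSet f δ₁ α ⊆ oscSet h ε c) (β : Ordinal.{u}) :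
    oscSet f δ₁ (α + 1) ∩ oscSet g δ₂ β ⊆ oscSet h ε (c + β) := by
  induction β using limitRecOn with
  | zero => simp [oscSet_zero]
  | add_one β ih =>
    rintro x ⟨hxf, hxg⟩
    rw [← add_assoc, mem_oscSet_add_one]
    set S := oscSet h ε (c + β)
    by_cases hxS : x ∈ S
    · exact Or.inl hxS
    have hαS : oscSet f δ₁ α ⊆ S := hα.trans (oscSet_mono h ε le_self_add)
    obtain ⟨V, hV, hxV, hVf⟩ := ((mem_oscSet_add_one f δ₁).1 hxf).resolve_left (hxS <| hαS ·)
    obtain ⟨W, hW, hxW, hWg⟩ := ((mem_oscSet_add_one g δ₂).1 hxg).resolve_left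
      fun hx => hxS (ih ⟨hxf, hx⟩)
    have hsub_f : (V ∩ W) \ S ⊆ V \ oscSet f δ₁ α :=
      fun y hy => ⟨hy.1.1, fun hyα => hy.2 (hαS hyα)⟩
    have hsub_g : (V ∩ W) \ S ⊆ W \ oscSet g δ₂ β :=
      fun y hy => ⟨hy.1.2, fun hyβ =>
        hy.2 (ih ⟨diff_subset_oscSet_add_one hV hVf (hsub_f hy), hyβ⟩)⟩
    exact Or.inr ⟨V ∩ W, hV.inter hW, ⟨hxV, hxW⟩, hfgh _
      ((Metric.ediam_mono (image_mono hsub_f)).trans_lt hVf)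
      ((Metric.ediam_mono (image_mono hsub_g)).trans_lt hWg)⟩
  | limit β hβ ih =>
    rw [oscSet_limit g δ₂ hβ, inter_iUnion₂]
    exact iUnion₂_subset fun γ hγ => (ih γ hγ).trans (oscSet_mono h ε (add_le_add_right hγ.le c))

lemma oscSet_subset_oscSet_mul
    (hfgh : ∀ S, Metric.ediam (f '' S) < δ₁ → Metric.ediam (g '' S) < δ₂ →
      Metric.ediam (h '' S) < ε)
    {b : Ordinal.{u}} (hb : oscSet g δ₂ b = Set.univ) (α : Ordinal.{u}) :
    oscSet f δ₁ α ⊆ oscSet h ε (b * α) := by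
  induction α using limitRecOn with
  | zero => simp [oscSet_zero]
  | add_one α ih =>
    rw [mul_add_one]
    simpa [hb] using inter_oscSet_subset_oscSet_add hfgh ih b
  | limit α hα ih =>
    rw [oscSet_limit f δ₁ hα]
    exact iUnion₂_subset fun γ hγ => (ih γ hγ).trans (oscSet_mono h ε (mul_le_mul_right hγ.le b))

lemma CountableOscRank.of_ediam_image_lt (hf : CountableOscRank f) (hg : CountableOscRank g)
    (hfgh : ∀ ε > 0, ∃ δ > 0, ∀ S, Metric.ediam (f '' S) < δ → Metric.ediam (g '' S) < δ →
      Metric.ediam (h '' S) < ε) :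
    CountableOscRank h := by
  intro ε hε
  obtain ⟨δ, hδ, hδε⟩ := hfgh ε hε
  obtain ⟨a, ha, hfa⟩ := hf δ hδ
  obtain ⟨b, hb, hgb⟩ := hg δ hδ
  refine ⟨b * a, isPrincipal_mul_omega 1 hb ha, eq_univ_of_univ_subset ?_⟩
  exact hfa ▸ oscSet_subset_oscSet_mul hδε hgb a

end Domination

section NormedRing

variable {X R : Type*} [SeminormedRing R]

lemma edist_mul_mul_le_nnnorm (a b c d : R) :
    edist (a * b) (c * d) ≤ ‖a‖₊ * edist b d + edist a c * ‖d‖₊ := by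
  have : a * b - c * d = a * (b - d) + (a - c) * d := by noncomm_ring
  simp only [edist_nndist, nndist_eq_nnnorm, this]
  exact_mod_cast (nnnorm_add_le _ _).trans (add_le_add (nnnorm_mul_le _ _) (nnnorm_mul_le _ _))

lemma ediam_image_mul_le {f g : X → R} {C D : ℝ≥0} (hf : ∀ x, ‖f x‖₊ ≤ C)
    (hg : ∀ x, ‖g x‖₊ ≤ D) (S : Set X) :
    Metric.ediam ((fun x => f x * g x) '' S) ≤
      C * Metric.ediam (g '' S) + Metric.ediam (f '' S) * D := by
  refine Metric.ediam_le ?_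
  rintro _ ⟨x, hx, rfl⟩ _ ⟨y, hy, rfl⟩
  calc edist (f x * g x) (f y * g y) ≤ ‖f x‖₊ * edist (g x) (g y) + edist (f x) (f y) * ‖g y‖₊ :=
        edist_mul_mul_le_nnnorm _ _ _ _
    _ ≤ C * Metric.ediam (g '' S) + Metric.ediam (f '' S) * D := by
        gcongr
        exacts [hf x, Metric.edist_le_ediam_of_mem (mem_image_of_mem g hx)
          (mem_image_of_mem g hy), Metric.edist_le_ediam_of_mem (mem_image_of_mem f hx)
          (mem_image_of_mem f hy), hg y]

lemma exists_nnnorm_le_of_isBounded_range {f : X → R} (hf : Bornology.IsBounded (range f)) :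
    ∃ C : ℝ≥0, ∀ x, ‖f x‖₊ ≤ C := by
  obtain ⟨C, hC⟩ := hf.exists_norm_le
  exact ⟨C.toNNReal, fun x => by simpa using Real.toNNReal_le_toNNReal (hC _ (mem_range_self x))⟩

lemma exists_ediam_image_mul_lt {f g : X → R} (hf : Bornology.IsBounded (range f))
    (hg : Bornology.IsBounded (range g)) {ε : ℝ≥0∞} (hε : 0 < ε) :
    ∃ δ > 0, ∀ S, Metric.ediam (f '' S) < δ → Metric.ediam (g '' S) < δ →
      Metric.ediam ((fun x => f x * g x) '' S) < ε := by
  obtain ⟨C, hC⟩ := exists_nnnorm_le_of_isBounded_range hf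
  obtain ⟨D, hD⟩ := exists_nnnorm_le_of_isBounded_range hg
  obtain ⟨δ, hδ, hδε⟩ := ENNReal.exists_pos_mul_lt (a := C + D) (by finiteness) hε.ne'
  refine ⟨δ, hδ, fun S hfS hgS => (ediam_image_mul_le hC hD S).trans_lt ?_⟩
  calc (C : ℝ≥0∞) * Metric.ediam (g '' S) + Metric.ediam (f '' S) * D ≤ C * δ + δ * D := by
        gcongr
    _ = δ * (C + D) := by ring
    _ < ε := hδε

end NormedRing

theorem stmt_16_general {X E : Type*} [TopologicalSpace X] [NormedCommRing E]
    (f g : X → E)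
    (hfb : Bornology.IsBounded (Set.range f)) (hgb : Bornology.IsBounded (Set.range g))
    (hf : CountableOscRank f) (hg : CountableOscRank g) :
    CountableOscRank (fun x => f x * g x) :=
  hf.of_ediam_image_lt hg fun _ hε => exists_ediam_image_mul_lt hfb hgb hε

/-- for a commutative Banach algebra `E`, the product of two bounded maps of
countable oscillation rank has countable oscillation rank. -/
theorem stmt_16 {X E : Type*} [TopologicalSpace X] [NormedCommRing E]
    [NormedAlgebra ℝ E] [CompleteSpace E]
    (f g : X → E)
    (hfb : Bornology.IsBounded (Set.range f)) (hgb : Bornology.IsBounded (Set.range g))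
    (hf : CountableOscRank f) (hg : CountableOscRank g) :
    CountableOscRank (fun x => f x * g x) :=
  stmt_16_general f g hfb hgb hf hg
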